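/- arXiv:0904.1367 — 6 statements merged into one kernel-verified Lean document; each statement's English description precedes it below -/
import Mathlib

section
/- Let ρ be a convenient relation on a finite set A, let ρ̂ be the minimal equivalence relation on A containing ρ, and let B be an equivalence class of ρ̂. Then there exists at most one element b ∈ B such that b is in the relation ρ with no element of A (i.e., there is no a ∈ A with b ρ a). -/
/-- A binary relation `ρ` on `A` is convenient if it is irreflexive and every element
has at most one successor and at most one predecessor. -/
def Convenient {A : Type*} (ρ : A → A → Prop) : Prop :=
  (∀ a b, ρ a b → a ≠ b) ∧
  (∀ a b c, ρ a b → ρ a c → b = c) ∧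
  (∀ a b c, ρ b a → ρ c a → b = c)

/-- `B` is an equivalence class of the minimal equivalence relation containing `ρ`. -/
def IsEquivClass {A : Type*} (ρ : A → A → Prop) (B : Set A) : Prop :=
  ∃ a : A, B = {b | Relation.EqvGen ρ a b}

/-!
If every element has at most one `ρ`-successor and `t` has none, then following successors
from any element either reaches `t` or never does, and a single `ρ`-step in either direction
does not change which. So the elements that reach `t` form a union of classes of the
equivalence closure; the class of `t` consists of elements reaching `t`, and a second terminal
element can reach `t` only by being `t`.
-/

namespace Relation

variable {A : Type*} {ρ : A → A → Prop}

theorem ReflTransGen.eq_of_forall_not_rel {a b : A} (h : ReflTransGen ρ a b)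
    (ha : ∀ c, ¬ ρ a c) : a = b := by
  rcases h.cases_head with rfl | ⟨c, hac, -⟩
  · rfl
  · exact absurd hac (ha c)

theorem reflTransGen_iff_of_rel_of_rightUnique (hρ : Relator.RightUnique ρ) {t a b : A}
    (ht : ∀ c, ¬ ρ t c) (hab : ρ a b) : ReflTransGen ρ a t ↔ ReflTransGen ρ b t := by
  refine ⟨fun hat => ?_, ReflTransGen.head hab⟩
  rcases hat.cases_head with rfl | ⟨c, hac, hct⟩
  · exact absurd hab (ht b)
  · rwa [hρ hab hac]

theorem EqvGen.reflTransGen_iff_of_rightUnique (hρ : Relator.RightUnique ρ) {t a b : A}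
    (ht : ∀ c, ¬ ρ t c) (hab : EqvGen ρ a b) : ReflTransGen ρ a t ↔ ReflTransGen ρ b t := by
  induction hab with
  | rel _ _ h => exact reflTransGen_iff_of_rel_of_rightUnique hρ ht h
  | refl => rfl
  | symm _ _ _ ih => exact ih.symm
  | trans _ _ _ _ _ ih₁ ih₂ => exact ih₁.trans ih₂

theorem EqvGen.eq_of_forall_not_rel_of_rightUnique (hρ : Relator.RightUnique ρ) {a b : A}
    (hab : EqvGen ρ a b) (ha : ∀ c, ¬ ρ a c) (hb : ∀ c, ¬ ρ b c) : a = b :=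
  ((hab.reflTransGen_iff_of_rightUnique hρ hb).2 .refl).eq_of_forall_not_rel ha

end Relation

theorem at_most_one_terminal_in_equiv_class_general {A : Type*}
    (ρ : A → A → Prop) (hρ : Convenient ρ) (B : Set A) (hB : IsEquivClass ρ B) :
    ∀ b₁ ∈ B, ∀ b₂ ∈ B, (∀ a : A, ¬ ρ b₁ a) → (∀ a : A, ¬ ρ b₂ a) → b₁ = b₂ := by
  obtain ⟨a, rfl⟩ := hB
  intro b₁ hb₁ b₂ hb₂ ht₁ ht₂
  have hb₁₂ : Relation.EqvGen ρ b₁ b₂ := (Relation.EqvGen.symm _ _ hb₁).trans _ _ _ hb₂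
  have hρ_rightUnique : Relator.RightUnique ρ := fun a b c => hρ.2.1 a b c
  exact hb₁₂.eq_of_forall_not_rel_of_rightUnique hρ_rightUnique ht₁ ht₂

/-- In every equivalence class of the equivalence closure of a convenient relation `ρ`
there is at most one element which is `ρ`-related to no element of `A`. -/
theorem at_most_one_terminal_in_equiv_class {A : Type*} [Fintype A]
    (ρ : A → A → Prop) (hρ : Convenient ρ) (B : Set A) (hB : IsEquivClass ρ B) :
    ∀ b₁ ∈ B, ∀ b₂ ∈ B, (∀ a : A, ¬ ρ b₁ a) → (∀ a : A, ¬ ρ b₂ a) → b₁ = b₂ :=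
  at_most_one_terminal_in_equiv_class_general ρ hρ B hB
end

section
/- Let ρ be a convenient relation on a finite set A, let ρ̂ be the minimal equivalence relation on A containing ρ, and let B be an equivalence class of ρ̂ with at least 2 elements. Then the elements of B can be enumerated as pairwise distinct a₀, a₁, …, a_n with {a₀, …, a_n} = B such that a_{i-1} ρ a_i holds for every i ∈ {1, …, n}. -/
/-! Take a longest duplicate-free `ρ`-chain inside the class. Since every element has at most
one successor and at most one predecessor, a `ρ`-neighbour of a chain element that is not on the
chain could only be attached at one of its two ends, producing a longer chain. So the chain is
closed under `ρ` in both directions, hence under the equivalence closure, and exhausts the class. -/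

section

variable {α : Type*} {r : α → α → Prop} {S : Set α} {l : List α} {a b u v : α}

lemma Relation.EqvGen.mem_iff_mem (hS : ∀ x y, r x y → (x ∈ S ↔ y ∈ S))
    (h : Relation.EqvGen r a b) : a ∈ S ↔ b ∈ S := by
  induction h with
  | rel x y hxy => exact hS x y hxy
  | refl => rfl
  | symm _ _ _ ih => exact ih.symm
  | trans _ _ _ _ _ ih₁ ih₂ => exact ih₁.trans ih₂

lemma List.IsChain.mem_or_getLast?_eq_of_rel (hr : ∀ a b c, r a b → r a c → b = c)
    (hl : l.IsChain r) (hu : u ∈ l) (huv : r u v) : v ∈ l ∨ l.getLast? = some u := by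
  induction hl with
  | nil => simp at hu
  | singleton x => simp_all
  | @cons_cons x y t hxy _ ih =>
    rcases List.mem_cons.1 hu with rfl | hu
    · exact .inl (hr _ _ _ hxy huv ▸ List.mem_cons_of_mem _ List.mem_cons_self)
    · rcases ih hu with hv | hlast
      · exact .inl (List.mem_cons_of_mem _ hv)
      · exact .inr (by simpa using hlast)

lemma List.IsChain.mem_or_head?_eq_of_rel (hr : ∀ a b c, r b a → r c a → b = c)
    (hl : l.IsChain r) (hu : u ∈ l) (hvu : r v u) : v ∈ l ∨ l.head? = some u := by
  have hrev : l.reverse.IsChain (flip r) := List.isChain_reverse.2 hl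
  simpa using hrev.mem_or_getLast?_eq_of_rel (fun a b c => hr a b c) (List.mem_reverse.2 hu) hvu

variable (r S) in
def IsSimpleChainIn (l : List α) : Prop :=
  l.Nodup ∧ l.IsChain r ∧ ∀ x ∈ l, x ∈ S

lemma exists_longest_isSimpleChainIn [Fintype α] (ha : a ∈ S) :
    ∃ l, IsSimpleChainIn r S l ∧ ∀ l', IsSimpleChainIn r S l' → l'.length ≤ l.length := by
  have hfin : {l | IsSimpleChainIn r S l}.Finite :=
    (List.finite_length_le α (Fintype.card α)).subset fun l hl => hl.1.length_le_card
  have hne : {l | IsSimpleChainIn r S l}.Nonempty :=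
    ⟨[a], by simp [IsSimpleChainIn, ha]⟩
  exact Set.exists_max_image _ List.length hfin hne

lemma IsSimpleChainIn.mem_iff_mem_of_longest (hsucc : ∀ a b c, r a b → r a c → b = c)
    (hpred : ∀ a b c, r b a → r c a → b = c) (hS : ∀ x y, r x y → (x ∈ S ↔ y ∈ S))
    (hl : IsSimpleChainIn r S l) (hmax : ∀ l', IsSimpleChainIn r S l' → l'.length ≤ l.length) :
    ∀ x y, r x y → (x ∈ l ↔ y ∈ l) := by
  obtain ⟨hnd, hc, hlS⟩ := hl
  intro x y hxy
  constructor
  · intro hx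
    by_contra hy
    have hlast := (hc.mem_or_getLast?_eq_of_rel hsucc hx hxy).resolve_left hy
    have hext : IsSimpleChainIn r S (l ++ [y]) := by
      refine ⟨?_, ?_, ?_⟩
      · exact List.concat_eq_append ▸ hnd.concat hy
      · exact List.isChain_append.2 ⟨hc, List.isChain_singleton y, by simp [hlast, hxy]⟩
      · simpa [or_imp, forall_and] using ⟨hlS, (hS x y hxy).1 (hlS x hx)⟩
    simpa using hmax _ hext
  · intro hy
    by_contra hx
    have hhead := (hc.mem_or_head?_eq_of_rel hpred hy hxy).resolve_left hx
    have hext : IsSimpleChainIn r S (x :: l) := by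
      refine ⟨List.nodup_cons.2 ⟨hx, hnd⟩, List.isChain_cons.2 ⟨by simp [hhead, hxy], hc⟩, ?_⟩
      simpa using ⟨(hS x y hxy).2 (hlS y hy), hlS⟩
    simpa using hmax _ hext

lemma List.exists_injective_fin_of_isChain (hne : l ≠ []) (hnd : l.Nodup) (hc : l.IsChain r) :
    ∃ (n : ℕ) (b : Fin (n + 1) → α), Function.Injective b ∧ Set.range b = {x | x ∈ l} ∧
      ∀ i : Fin n, r (b i.castSucc) (b i.succ) := by
  obtain ⟨n, hn⟩ : ∃ n, l.length = n + 1 := Nat.exists_eq_add_one.2 (List.length_pos_iff.2 hne)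
  refine ⟨n, l.get ∘ finCongr hn.symm, ?_, ?_, fun i => ?_⟩
  · exact (List.nodup_iff_injective_get.1 hnd).comp (finCongr _).injective
  · rw [(finCongr _).surjective.range_comp, Set.range_list_get]
  · exact List.isChain_iff_getElem.1 hc i (by omega)

end

theorem equiv_class_enumerated_as_chain_general {A : Type*} [Fintype A]
    (ρ : A → A → Prop) (hρ : Convenient ρ) (B : Set A) (hB : IsEquivClass ρ B) :
    ∃ (n : ℕ) (b : Fin (n + 1) → A), Function.Injective b ∧ Set.range b = B ∧
      ∀ i : Fin n, ρ (b i.castSucc) (b i.succ) := by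
  obtain ⟨-, hsucc, hpred⟩ := hρ
  obtain ⟨a, rfl⟩ := hB
  have hsat : ∀ x y, ρ x y → (Relation.EqvGen ρ a x ↔ Relation.EqvGen ρ a y) :=
    fun x y hxy => ⟨fun hx => hx.trans _ _ _ (.rel _ _ hxy),
      fun hy => hy.trans _ _ _ (.symm _ _ (.rel _ _ hxy))⟩
  obtain ⟨l, hl, hmax⟩ := exists_longest_isSimpleChainIn (r := ρ)
    (S := {b | Relation.EqvGen ρ a b}) (Relation.EqvGen.refl a)
  have hlong : 1 ≤ l.length := hmax [a] ⟨by simp, by simp, by simpa using .refl a⟩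
  have hne : l ≠ [] := List.length_pos_iff.1 hlong
  have hclass : {x | x ∈ l} = {b | Relation.EqvGen ρ a b} := by
    refine Set.ext fun x => ⟨hl.2.2 x, fun hx => ?_⟩
    obtain ⟨y, hy⟩ := List.exists_mem_of_ne_nil l hne
    have hyx : Relation.EqvGen ρ y x := (hl.2.2 y hy).symm.trans _ _ _ hx
    exact (hyx.mem_iff_mem (hl.mem_iff_mem_of_longest hsucc hpred hsat hmax)).1 hy
  simpa [hclass] using List.exists_injective_fin_of_isChain hne hl.1 hl.2.1

/-- Every equivalence class `B` with at least two elements of the equivalence closure of a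
convenient relation `ρ` can be enumerated by pairwise distinct elements `a₀, …, a_n` with
`a_{i-1} ρ a_i` for every `i`. -/
theorem equiv_class_enumerated_as_chain {A : Type*} [Fintype A]
    (ρ : A → A → Prop) (hρ : Convenient ρ) (B : Set A) (hB : IsEquivClass ρ B)
    (hcard : 2 ≤ B.ncard) :
    ∃ (n : ℕ) (b : Fin (n + 1) → A), Function.Injective b ∧ Set.range b = B ∧
      ∀ i : Fin n, ρ (b i.castSucc) (b i.succ) :=
  equiv_class_enumerated_as_chain_general ρ hρ B hB
end

section
/- Let A be a finite set with at least 3 elements and O a complete cyclic order on A. Then all elements of A generate a ρ_O-cycle, where ρ_O is the binary relation induced by O; equivalently, the minimal equivalence relation containing ρ_O has A itself as its unique equivalence class. -/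
/-- A ternary relation `O` is a cyclic order if it is asymmetric, transitive and cyclic. -/
def IsCyclicOrder {A : Type*} (O : A → A → A → Prop) : Prop :=
  (∀ x y z, O x y z → ¬ O z y x) ∧
  (∀ x y z u, O x y z → O x z u → O x y u) ∧
  (∀ x y z, O x y z → O y z x)

/-- A cyclic order is complete if any three pairwise distinct elements admit a
permutation that is cyclically ordered. -/
def IsCompleteCyclicOrder {A : Type*} (O : A → A → A → Prop) : Prop :=
  IsCyclicOrder O ∧
  ∀ x y z : A, x ≠ y → y ≠ z → x ≠ z →
    (O x y z ∨ O x z y ∨ O y x z ∨ O y z x ∨ O z x y ∨ O z y x)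

/-- The elements of `B` generate a `ρ`-cycle: they can be listed as `b₀, …, b_n` (`n ≥ 1`)
with `B = {b₀, …, b_n}`, `b_{i-1} ρ b_i` for `1 ≤ i ≤ n` and `b_n ρ b₀`. -/
def GenCycle {A : Type*} (ρ : A → A → Prop) (B : Set A) : Prop :=
  ∃ n : ℕ, 1 ≤ n ∧ ∃ b : Fin (n + 1) → A, Set.range b = B ∧
    (∀ i : Fin n, ρ (b i.castSucc) (b i.succ)) ∧ ρ (b (Fin.last n)) (b 0)

/-- The elements of `B` generate a `ρ`-chain: they can be listed as `b₀, …, b_n` (`n ≥ 0`)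
with `B = {b₀, …, b_n}`, `b_{i-1} ρ b_i` for `1 ≤ i ≤ n`, no element is `ρ`-related to `b₀`
and `b_n` is `ρ`-related to no element. -/
def GenChain {A : Type*} (ρ : A → A → Prop) (B : Set A) : Prop :=
  ∃ n : ℕ, ∃ b : Fin (n + 1) → A, Set.range b = B ∧
    (∀ a, ¬ ρ a (b 0)) ∧ (∀ a, ¬ ρ (b (Fin.last n)) a) ∧
    (∀ i : Fin n, ρ (b i.castSucc) (b i.succ))

/-- The binary relation induced by a cyclic order `O`: `a ρ_O b` iff `O a b c` holds for
every `c ∉ {a, b}`. -/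
def rhoOf {A : Type*} (O : A → A → A → Prop) (a b : A) : Prop :=
  ∀ c, c ≠ a → c ≠ b → O a b c

/-!
Cut the cycle open at any point `a`: listing `A` as `a = b₀, b₁, …, b_n` in the linear order
`x < y ↔ O a x y` makes every triple `bᵢ, bⱼ, b_l` with `i < j < l` cyclically ordered. Then each
`c ∉ {bᵢ, bᵢ₊₁}` lies before `bᵢ` or after `bᵢ₊₁`, so `bᵢ ρ_O bᵢ₊₁` after a rotation, and
likewise `b_n ρ_O b₀`. This cycle passes through every element, so the equivalence closure of
`ρ_O` is total.
-/

section

variable {A : Type*} {O : A → A → A → Prop} {a x y z : A}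

namespace IsCyclicOrder

theorem rotate (hO : IsCyclicOrder O) ⦃x y z : A⦄ (h : O x y z) : O y z x := hO.2.2 x y z h

theorem ne₁₂ (hO : IsCyclicOrder O) (h : O x y z) : x ≠ y := by
  rintro rfl
  exact hO.1 _ _ _ h (hO.rotate (hO.rotate h))

theorem ne₂₃ (hO : IsCyclicOrder O) (h : O x y z) : y ≠ z :=
  hO.ne₁₂ (hO.rotate h)

theorem ne₃₁ (hO : IsCyclicOrder O) (h : O x y z) : z ≠ x :=
  hO.ne₂₃ (hO.rotate h)

end IsCyclicOrder

/-- The cyclic order `O` cut open at `a`, as a strict linear order with least element `a`. -/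
def cutAt (O : A → A → A → Prop) (a x y : A) : Prop :=
  (x = a ∧ y ≠ a) ∨ O a x y

namespace IsCompleteCyclicOrder

theorem apply_or_apply_swap (hO : IsCompleteCyclicOrder O) (hxy : x ≠ y) (hyz : y ≠ z)
    (hxz : x ≠ z) : O x y z ∨ O x z y := by
  have rot := hO.1.rotate
  rcases hO.2 x y z hxy hyz hxz with h | h | h | h | h | h
  exacts [.inl h, .inr h, .inr (rot h), .inl (rot (rot h)), .inl (rot h), .inr (rot (rot h))]

theorem apply_of_apply_of_apply (hO : IsCompleteCyclicOrder O) (h₁ : O a x y) (h₂ : O a y z) :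
    O x y z := by
  obtain ⟨asymm, trans, -⟩ := hO.1
  have rot := hO.1.rotate
  have hxz : x ≠ z := by
    rintro rfl
    exact asymm _ _ _ h₁ (rot h₂)
  refine (hO.apply_or_apply_swap (hO.1.ne₂₃ h₁) (hO.1.ne₂₃ h₂) hxz).resolve_right ?_
  intro hxzy
  have hyaz : O y a z := trans _ _ _ _ (rot (rot h₁)) (rot (rot hxzy))
  exact asymm _ _ _ h₂ (rot (rot hyaz))

theorem isStrictTotalOrder_cutAt (hO : IsCompleteCyclicOrder O) (a : A) :
    IsStrictTotalOrder A (cutAt O a) where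
  irrefl x := by
    rintro (⟨rfl, h⟩ | h)
    exacts [h rfl, hO.1.ne₂₃ h rfl]
  trans x y z := by
    rintro (⟨hx, hy⟩ | hxy) (⟨hy', -⟩ | hyz)
    exacts [absurd hy' hy, .inl ⟨hx, hO.1.ne₃₁ hyz⟩, absurd hy' (hO.1.ne₃₁ hxy),
      .inr (hO.1.2.1 _ _ _ _ hxy hyz)]
  trichotomous x y hxy hyx := by
    by_cases hx : x = a
    · by_cases hy : y = a
      · exact hx.trans hy.symm
      · exact absurd (.inl ⟨hx, hy⟩) hxy
    by_cases hy : y = a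
    · exact absurd (.inl ⟨hy, hx⟩) hyx
    by_contra hne
    rcases hO.apply_or_apply_swap (Ne.symm hx) hne (Ne.symm hy) with h | h
    exacts [hxy (.inr h), hyx (.inr h)]

theorem apply_of_cutAt (hO : IsCompleteCyclicOrder O) (hxy : cutAt O a x y)
    (hyz : cutAt O a y z) : O x y z := by
  have hya : y ≠ a := by
    rcases hxy with ⟨-, hy⟩ | h
    exacts [hy, hO.1.ne₃₁ h]
  have hayz : O a y z := hyz.resolve_left fun h => hya h.1
  rcases hxy with ⟨rfl, -⟩ | haxy
  exacts [hayz, hO.apply_of_apply_of_apply haxy hayz]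

theorem exists_surjective_apply_of_lt [Fintype A] (hO : IsCompleteCyclicOrder O) {n : ℕ}
    (hn : Fintype.card A = n + 1) :
    ∃ b : Fin (n + 1) → A, Function.Surjective b ∧
      ∀ i j l, i < j → j < l → O (b i) (b j) (b l) := by
  classical
  obtain ⟨a⟩ : Nonempty A := Fintype.card_pos_iff.mp (by omega)
  have := hO.isStrictTotalOrder_cutAt a
  let : LinearOrder A := linearOrderOfSTO (cutAt O a)
  let e := Fintype.orderIsoFinOfCardEq A hn
  exact ⟨e, e.surjective, fun i j l hij hjl =>
    hO.apply_of_cutAt (a := a) (e.lt_iff_lt.mpr hij) (e.lt_iff_lt.mpr hjl)⟩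

end IsCompleteCyclicOrder

theorem genCycle_rhoOf_of_apply_of_lt (hrot : ∀ x y z, O x y z → O y z x) {n : ℕ}
    (b : Fin (n + 2) → A) (hb : Function.Surjective b)
    (hmono : ∀ i j l, i < j → j < l → O (b i) (b j) (b l)) :
    GenCycle (rhoOf O) Set.univ := by
  refine ⟨n + 1, by omega, b, Set.range_eq_univ.mpr hb, ?_, ?_⟩
  · intro i c hci hcs
    obtain ⟨m, rfl⟩ := hb c
    rcases lt_or_gt_of_ne (ne_of_apply_ne b hci) with hm | hm
    · exact hrot _ _ _ (hmono _ _ _ hm Fin.castSucc_lt_succ)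
    · have hsm : i.succ < m :=
        lt_of_le_of_ne (Fin.castSucc_lt_iff_succ_le.mp hm) (ne_of_apply_ne b hcs).symm
      exact hmono _ _ _ Fin.castSucc_lt_succ hsm
  · intro c hcl hc0
    obtain ⟨m, rfl⟩ := hb c
    have h0m : 0 < m := Fin.pos_of_ne_zero (ne_of_apply_ne b hc0)
    have hml : m < Fin.last (n + 1) := lt_of_le_of_ne (Fin.le_last m) (ne_of_apply_ne b hcl)
    exact hrot _ _ _ (hrot _ _ _ (hmono _ _ _ h0m hml))

theorem GenCycle.eqvGen {ρ : A → A → Prop} (h : GenCycle ρ Set.univ) (x y : A) :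
    Relation.EqvGen ρ x y := by
  obtain ⟨n, -, b, hrange, hchain, -⟩ := h
  have hb₀ (i : Fin (n + 1)) : Relation.EqvGen ρ (b 0) (b i) := by
    induction i using Fin.induction with
    | zero => exact .refl _
    | succ i ih => exact ih.trans _ _ _ (.rel _ _ (hchain i))
  obtain ⟨i, rfl⟩ := Set.range_eq_univ.mp hrange x
  obtain ⟨j, rfl⟩ := Set.range_eq_univ.mp hrange y
  exact (hb₀ i).symm.trans _ _ _ (hb₀ j)

end

/-- For a complete cyclic order `O` on a finite set `A` with at least three elements,
all elements of `A` generate a `ρ_O`-cycle; equivalently, the equivalence closure of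
`ρ_O` has `A` itself as its unique equivalence class. -/
theorem all_elements_generate_rhoO_cycle {A : Type*} [Fintype A]
    (hA : 3 ≤ Fintype.card A) (O : A → A → A → Prop)
    (hO : IsCompleteCyclicOrder O) :
    GenCycle (rhoOf O) (Set.univ : Set A) ∧
      ∀ B : Set A, IsEquivClass (rhoOf O) B → B = Set.univ := by
  obtain ⟨b, hb, hmono⟩ :=
    hO.exists_surjective_apply_of_lt (n := Fintype.card A - 2 + 1) (by omega)
  have hcycle := genCycle_rhoOf_of_apply_of_lt hO.1.2.2 b hb hmono
  refine ⟨hcycle, ?_⟩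
  rintro B ⟨a, rfl⟩
  exact Set.eq_univ_of_forall (hcycle.eqvGen a)
end

section
/- Let ρ be a convenient relation on a finite set A with at least 3 elements such that all elements of A generate a ρ-cycle. Let μ be the relation whose graph is obtained from the graph of ρ by removing two distinct pairs (b₁, b₁') and (b₂, b₂') belonging to the graph of ρ (the cases b₁' = b₂ or b₂' = b₁ are allowed), and let μ̂ be the minimal equivalence relation containing μ. Then μ is a convenient relation, μ̂ has exactly two equivalence classes B₁ and B₂, the elements of each class generate a μ-chain, and b₁ and b₂ belong to different equivalence classes of μ̂. -/
/-!
The successor function `f` of `ρ` is injective and has a single orbit. Enumerate this orbit as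
`c 0 = f b₁, …, c (d - 1) = b₁`, where `d` is the minimal period, and write `b₂ = c q`. Removing
the two pairs leaving `b₁` and `b₂` cuts the cycle into the `μ`-chains `c 0, …, c q` and
`c (q + 1), …, c (d - 1)`. A `μ`-chain of a convenient relation is closed under `μ` in both
directions, so it is an entire class of the equivalence closure.
-/

open Function Set

section

variable {A : Type*} {ρ μ : A → A → Prop}

theorem Convenient.mono (hρ : Convenient ρ) (hμ : ∀ x y, μ x y → ρ x y) : Convenient μ :=
  ⟨fun a b h => hρ.1 a b (hμ a b h),
    fun a b c h h' => hρ.2.1 a b c (hμ a b h) (hμ a c h'),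
    fun a b c h h' => hρ.2.2 a b c (hμ b a h) (hμ c a h')⟩

theorem Convenient.exists_injective_of_total (hρ : Convenient ρ) (htotal : ∀ a, ∃ a', ρ a a') :
    ∃ f : A → A, Injective f ∧ ∀ x y, ρ x y ↔ f x = y := by
  choose f hf using htotal
  have hρf : ∀ x y, ρ x y ↔ f x = y := fun x y =>
    ⟨fun h => hρ.2.1 x _ _ (hf x) h, fun h => h ▸ hf x⟩
  exact ⟨f, fun x y h => hρ.2.2 _ x y (hf x) ((hρf y (f x)).2 h.symm), hρf⟩

theorem GenCycle.exists_rel_of_mem {B : Set A} (h : GenCycle ρ B) {a : A} (ha : a ∈ B) :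
    ∃ a', ρ a a' := by
  obtain ⟨n, -, b, rfl, hsteps, hwrap⟩ := h
  obtain ⟨i, rfl⟩ := ha
  rcases Fin.eq_castSucc_or_eq_last i with ⟨j, rfl⟩ | rfl
  · exact ⟨_, hsteps j⟩
  · exact ⟨_, hwrap⟩

theorem Function.IsPeriodicPt.exists_iterate_iterate_eq {f : A → A} {p : ℕ} {x : A}
    (hx : IsPeriodicPt f p x) (hp : 0 < p) (i : ℕ) : ∃ k, f^[k] (f^[i] x) = x := by
  refine ⟨p * i - i, ?_⟩
  rw [← iterate_add_apply, Nat.sub_add_cancel (Nat.le_mul_of_pos_left i hp)]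
  exact (hx.mul_const i).eq

theorem GenCycle.exists_iterate_eq {f : A → A} (hcyc : GenCycle ρ univ)
    (hf : ∀ x y, ρ x y → f x = y) (x y : A) : ∃ k, f^[k] x = y := by
  obtain ⟨n, -, b, hrange, hsteps, hwrap⟩ := hcyc
  have hiter : ∀ i : Fin (n + 1), b i = f^[i] (b 0) := by
    intro i
    induction i using Fin.induction with
    | zero => rfl
    | succ i ih =>
      rw [Fin.val_succ, iterate_succ_apply', ← Fin.val_castSucc, ← ih]
      exact (hf _ _ (hsteps i)).symm
  have hper : IsPeriodicPt f (n + 1) (b 0) := by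
    have := hiter (Fin.last n)
    rw [Fin.val_last] at this
    rw [IsPeriodicPt, IsFixedPt, iterate_succ_apply', ← this]
    exact hf _ _ hwrap
  have hmem : ∀ z, ∃ i : Fin (n + 1), f^[i] (b 0) = z := fun z => by
    obtain ⟨i, rfl⟩ : z ∈ range b := hrange ▸ mem_univ z
    exact ⟨i, (hiter i).symm⟩
  obtain ⟨i, rfl⟩ := hmem x
  obtain ⟨j, rfl⟩ := hmem y
  obtain ⟨k, hk⟩ := hper.exists_iterate_iterate_eq n.succ_pos i
  exact ⟨j + k, by rw [iterate_add_apply, hk]⟩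

theorem genChain_image_Icc (c : ℕ → A) {i j : ℕ} (hij : i ≤ j)
    (hfirst : ∀ a, ¬ μ a (c i)) (hlast : ∀ a, ¬ μ (c j) a)
    (hstep : ∀ k, i ≤ k → k < j → μ (c k) (c (k + 1))) :
    GenChain μ (c '' Icc i j) := by
  refine ⟨j - i, fun t => c (i + t), ?_, hfirst, ?_, fun t => hstep (i + t) (by omega) (by omega)⟩
  · ext a
    constructor
    · rintro ⟨t, rfl⟩
      exact ⟨i + t, ⟨by omega, by omega⟩, rfl⟩
    · rintro ⟨k, ⟨hik, hkj⟩, rfl⟩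
      exact ⟨⟨k - i, by omega⟩, by simp only [Nat.add_sub_cancel' hik]⟩
  · simpa only [Fin.val_last, Nat.add_sub_cancel' hij] using hlast

theorem GenChain.eq_setOf_eqvGen (hμ : Convenient μ) {B : Set A} (hB : GenChain μ B) {a : A}
    (ha : a ∈ B) : B = {x | Relation.EqvGen μ a x} := by
  obtain ⟨n, b, rfl, hfirst, hlast, hsteps⟩ := hB
  have hclosed : ∀ x y, μ x y → (x ∈ range b ↔ y ∈ range b) := by
    intro x y hxy
    constructor
    · rintro ⟨i, rfl⟩
      rcases Fin.eq_castSucc_or_eq_last i with ⟨j, rfl⟩ | rfl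
      · exact ⟨j.succ, hμ.2.1 _ _ _ (hsteps j) hxy⟩
      · exact (hlast y hxy).elim
    · rintro ⟨i, rfl⟩
      rcases Fin.eq_zero_or_eq_succ i with rfl | ⟨j, rfl⟩
      · exact (hfirst x hxy).elim
      · exact ⟨j.castSucc, hμ.2.2 _ _ _ (hsteps j) hxy⟩
  have hconn : ∀ i, Relation.EqvGen μ (b 0) (b i) := by
    intro i
    induction i using Fin.induction with
    | zero => exact .refl _
    | succ i ih => exact ih.trans _ _ _ (.rel _ _ (hsteps i))
  ext x
  refine ⟨?_, fun h => ?_⟩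
  · rintro ⟨i, rfl⟩
    obtain ⟨j, rfl⟩ := ha
    exact ((hconn j).symm _ _).trans _ _ _ (hconn i)
  · suffices ∀ u v, Relation.EqvGen μ u v → (u ∈ range b ↔ v ∈ range b) from (this a x h).1 ha
    intro u v huv
    induction huv with
    | rel u v huv => exact hclosed u v huv
    | refl => rfl
    | symm u v _ ih => exact ih.symm
    | trans u v w _ _ ih₁ ih₂ => exact ih₁.trans ih₂

theorem Function.exists_lt_minimalPeriod_iterate_eq {f : A → A}
    (horbit : ∀ x y, ∃ k, f^[k] x = y) (x y : A) : ∃ k < minimalPeriod f x, f^[k] x = y := by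
  obtain ⟨k, hk⟩ := horbit (f x) x
  have hx : x ∈ periodicPts f :=
    mk_mem_periodicPts k.succ_pos (by rwa [IsPeriodicPt, IsFixedPt, iterate_succ_apply])
  obtain ⟨m, rfl⟩ := horbit x y
  exact ⟨m % minimalPeriod f x, Nat.mod_lt m (minimalPeriod_pos_of_mem_periodicPts hx),
    iterate_mod_minimalPeriod_eq⟩

theorem exists_genChain_split {f : A → A} (hf : Injective f) (horbit : ∀ x y, ∃ k, f^[k] x = y)
    {b₁ b₂ : A} (hb : b₁ ≠ b₂) (hμ : ∀ x y, μ x y ↔ f x = y ∧ x ≠ b₁ ∧ x ≠ b₂) :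
    ∃ B₁ B₂ : Set A, b₁ ∈ B₁ ∧ b₂ ∈ B₂ ∧ b₁ ∉ B₂ ∧ B₁ ∪ B₂ = univ ∧
      GenChain μ B₁ ∧ GenChain μ B₂ := by
  set c : ℕ → A := fun k => f^[k] (f b₁)
  set d := minimalPeriod f (f b₁)
  have hsurj : ∀ a, ∃ k < d, c k = a := exists_lt_minimalPeriod_iterate_eq horbit (f b₁)
  have hinj : ∀ {j k}, j < d → k < d → c j = c k → j = k := fun hj hk h =>
    iterate_injOn_Iio_minimalPeriod hj hk h
  have hc_succ : ∀ k, c (k + 1) = f (c k) := fun k => iterate_succ_apply' f k (f b₁)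
  have hd : 0 < d := by
    obtain ⟨k, hk, -⟩ := hsurj b₁
    omega
  have hc_last : c (d - 1) = b₁ := hf <| by
    rw [← hc_succ, Nat.sub_add_cancel hd]
    exact iterate_minimalPeriod
  obtain ⟨q, hqd, hc_q⟩ := hsurj b₂
  have hq : q + 1 < d := by
    have : q ≠ d - 1 := fun h => hb (hc_last ▸ h ▸ hc_q)
    omega
  have hin : ∀ a, ¬ μ a (f b₁) ∧ ¬ μ a (f b₂) := fun a =>
    ⟨fun h => ((hμ _ _).1 h).2.1 (hf ((hμ _ _).1 h).1),
      fun h => ((hμ _ _).1 h).2.2 (hf ((hμ _ _).1 h).1)⟩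
  have hout : ∀ a, ¬ μ b₁ a ∧ ¬ μ b₂ a := fun a =>
    ⟨fun h => ((hμ _ _).1 h).2.1 rfl, fun h => ((hμ _ _).1 h).2.2 rfl⟩
  have hstep : ∀ k, k + 1 < d → k ≠ q → μ (c k) (c (k + 1)) := fun k hk hkq =>
    (hμ _ _).2 ⟨(hc_succ k).symm,
      fun h => absurd (hinj (by omega) (by omega) (h.trans hc_last.symm)) (by omega),
      fun h => hkq (hinj (by omega) hqd (h.trans hc_q.symm))⟩
  refine ⟨c '' Icc (q + 1) (d - 1), c '' Icc 0 q, ⟨d - 1, ⟨by omega, le_rfl⟩, hc_last⟩,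
    ⟨q, ⟨Nat.zero_le q, le_rfl⟩, hc_q⟩, ?_, ?_, ?_, ?_⟩
  · rintro ⟨k, ⟨-, hkq⟩, hk⟩
    have := hinj (by omega) (by omega) (hk.trans hc_last.symm)
    omega
  · refine eq_univ_of_forall fun a => ?_
    obtain ⟨k, hkd, rfl⟩ := hsurj a
    by_cases hkq : k ≤ q
    exacts [Or.inr ⟨k, ⟨Nat.zero_le k, hkq⟩, rfl⟩, Or.inl ⟨k, ⟨by omega, by omega⟩, rfl⟩]
  · refine genChain_image_Icc c (by omega) ?_ ?_ fun k hk hk' => hstep k (by omega) (by omega)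
    · simpa only [hc_succ, hc_q] using fun a => (hin a).2
    · simpa only [hc_last] using fun a => (hout a).1
  · refine genChain_image_Icc c (Nat.zero_le q) (fun a => (hin a).1) ?_
      fun k _ hk => hstep k (by omega) (by omega)
    simpa only [hc_q] using fun a => (hout a).2

end

theorem remove_two_pairs_from_cycle_general {A : Type*}
    (ρ : A → A → Prop) (hρ : Convenient ρ)
    (hcyc : GenCycle ρ (Set.univ : Set A))
    (b₁ b₁' b₂ b₂' : A) (h₁ : ρ b₁ b₁') (h₂ : ρ b₂ b₂')
    (hne : (b₁, b₁') ≠ (b₂, b₂'))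
    (μ : A → A → Prop)
    (hμ : ∀ x y : A, μ x y ↔ (ρ x y ∧ (x, y) ≠ (b₁, b₁') ∧ (x, y) ≠ (b₂, b₂'))) :
    Convenient μ ∧
    ∃ B₁ B₂ : Set A, B₁ ≠ B₂ ∧ IsEquivClass μ B₁ ∧ IsEquivClass μ B₂ ∧
      (∀ B : Set A, IsEquivClass μ B → B = B₁ ∨ B = B₂) ∧
      GenChain μ B₁ ∧ GenChain μ B₂ ∧ b₁ ∈ B₁ ∧ b₂ ∈ B₂ := by
  have hμρ : Convenient μ := hρ.mono fun x y h => ((hμ x y).1 h).1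
  obtain ⟨f, hf, hρf⟩ := hρ.exists_injective_of_total fun a => hcyc.exists_rel_of_mem (mem_univ a)
  obtain rfl := (hρf _ _).1 h₁
  obtain rfl := (hρf _ _).1 h₂
  have hb : b₁ ≠ b₂ := fun h => hne (h ▸ rfl)
  have hμf : ∀ x y, μ x y ↔ f x = y ∧ x ≠ b₁ ∧ x ≠ b₂ := by
    intro x y
    simp only [hμ, hρf, ne_eq, Prod.mk.injEq]
    grind
  obtain ⟨B₁, B₂, hb₁, hb₂, hb₁₂, hcover, hchain₁, hchain₂⟩ :=
    exists_genChain_split hf (hcyc.exists_iterate_eq fun x y => (hρf x y).1) hb hμf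
  refine ⟨hμρ, B₁, B₂, fun h => hb₁₂ (h ▸ hb₁), ⟨b₁, hchain₁.eq_setOf_eqvGen hμρ hb₁⟩,
    ⟨b₂, hchain₂.eq_setOf_eqvGen hμρ hb₂⟩, ?_, hchain₁, hchain₂, hb₁, hb₂⟩
  rintro B ⟨a, rfl⟩
  rcases (hcover ▸ mem_univ a : a ∈ B₁ ∪ B₂) with ha | ha
  exacts [Or.inl (hchain₁.eq_setOf_eqvGen hμρ ha).symm,
    Or.inr (hchain₂.eq_setOf_eqvGen hμρ ha).symm]

/-- Removing two distinct pairs from the graph of a convenient relation `ρ` whose elements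
generate a `ρ`-cycle on all of `A` yields a convenient relation `μ` whose equivalence
closure has exactly two classes; the elements of each class generate a `μ`-chain and the
first components of the removed pairs lie in different classes. -/
theorem remove_two_pairs_from_cycle {A : Type*} [Fintype A]
    (hA : 3 ≤ Fintype.card A)
    (ρ : A → A → Prop) (hρ : Convenient ρ)
    (hcyc : GenCycle ρ (Set.univ : Set A))
    (b₁ b₁' b₂ b₂' : A) (h₁ : ρ b₁ b₁') (h₂ : ρ b₂ b₂')
    (hne : (b₁, b₁') ≠ (b₂, b₂'))
    (μ : A → A → Prop)
    (hμ : ∀ x y : A, μ x y ↔ (ρ x y ∧ (x, y) ≠ (b₁, b₁') ∧ (x, y) ≠ (b₂, b₂'))) :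
    Convenient μ ∧
    ∃ B₁ B₂ : Set A, B₁ ≠ B₂ ∧ IsEquivClass μ B₁ ∧ IsEquivClass μ B₂ ∧
      (∀ B : Set A, IsEquivClass μ B → B = B₁ ∨ B = B₂) ∧
      GenChain μ B₁ ∧ GenChain μ B₂ ∧ b₁ ∈ B₁ ∧ b₂ ∈ B₂ :=
  remove_two_pairs_from_cycle_general ρ hρ hcyc b₁ b₁' b₂ b₂' h₁ h₂ hne μ hμ
end

section
/- Let D² be the closed unit disk in the Euclidean plane ℝ², let x be a point of the boundary circle ∂D², and let W be an open neighborhood of x in the subspace D². If W₁ and W₂ are connected components of the set W ∩ (D² \ ∂D²) such that x belongs to the closure of W₁ and to the closure of W₂, then W₁ = W₂. -/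
/-! Near `x`, the set `W ∩ (D² \ ∂D²)` contains `ball x ε ∩ ball 0 1`, which is convex and hence
lies in a single component; every component whose closure contains `x` meets that set. -/

open Set Filter Topology

theorem connectedComponentIn_eq_of_mem_closure {X : Type*} [TopologicalSpace X] {S N : Set X}
    {x p q : X} (hN : N ∈ 𝓝 x) (hNS : IsPreconnected (N ∩ S))
    (hp : x ∈ closure (connectedComponentIn S p)) (hq : x ∈ closure (connectedComponentIn S q)) :
    connectedComponentIn S p = connectedComponentIn S q := by
  obtain ⟨p', hp'N, hp'C⟩ := mem_closure_iff_nhds.1 hp N hN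
  obtain ⟨q', hq'N, hq'C⟩ := mem_closure_iff_nhds.1 hq N hN
  have hNS_sub : N ∩ S ⊆ connectedComponentIn S p' :=
    hNS.subset_connectedComponentIn ⟨hp'N, connectedComponentIn_subset _ _ hp'C⟩
      inter_subset_right
  calc connectedComponentIn S p = connectedComponentIn S p' := connectedComponentIn_eq hp'C
    _ = connectedComponentIn S q' :=
      connectedComponentIn_eq (hNS_sub ⟨hq'N, connectedComponentIn_subset _ _ hq'C⟩)
    _ = connectedComponentIn S q := (connectedComponentIn_eq hq'C).symm

theorem Convex.exists_mem_nhds_isPreconnected_inter_open_inter {E : Type*}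
    [SeminormedAddCommGroup E] [NormedSpace ℝ E] {U K : Set E} {x : E} (hK : Convex ℝ K)
    (hU : IsOpen U) (hx : x ∈ U) : ∃ N ∈ 𝓝 x, IsPreconnected (N ∩ (U ∩ K)) := by
  obtain ⟨ε, hε, hεU⟩ := Metric.isOpen_iff.1 hU x hx
  refine ⟨Metric.ball x ε, Metric.ball_mem_nhds x hε, ?_⟩
  rw [← inter_assoc, inter_eq_left.2 hεU]
  exact ((convex_ball x ε).inter hK).isPreconnected

theorem unit_disk_components_at_boundary_point_general
    (x : EuclideanSpace ℝ (Fin 2))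
    (W : Set (EuclideanSpace ℝ (Fin 2)))
    (hW : ∃ U : Set (EuclideanSpace ℝ (Fin 2)), IsOpen U ∧
      W = U ∩ Metric.closedBall (0 : EuclideanSpace ℝ (Fin 2)) 1)
    (hxW : x ∈ W)
    (W₁ W₂ : Set (EuclideanSpace ℝ (Fin 2)))
    (h₁ : ∃ p ∈ W ∩ Metric.ball (0 : EuclideanSpace ℝ (Fin 2)) 1,
      W₁ = connectedComponentIn (W ∩ Metric.ball (0 : EuclideanSpace ℝ (Fin 2)) 1) p)
    (h₂ : ∃ p ∈ W ∩ Metric.ball (0 : EuclideanSpace ℝ (Fin 2)) 1,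
      W₂ = connectedComponentIn (W ∩ Metric.ball (0 : EuclideanSpace ℝ (Fin 2)) 1) p)
    (hx₁ : x ∈ closure W₁) (hx₂ : x ∈ closure W₂) :
    W₁ = W₂ := by
  obtain ⟨U, hU, rfl⟩ := hW
  obtain ⟨p, -, rfl⟩ := h₁
  obtain ⟨q, -, rfl⟩ := h₂
  obtain ⟨N, hN, hNS⟩ := ((convex_closedBall (0 : EuclideanSpace ℝ (Fin 2)) 1).inter
    (convex_ball 0 1)).exists_mem_nhds_isPreconnected_inter_open_inter hU hxW.1
  rw [inter_assoc] at hx₁ hx₂ ⊢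
  exact connectedComponentIn_eq_of_mem_closure hN hNS hx₁ hx₂

/-- The closed unit disk is locally connected at boundary points: if `W` is an open
neighborhood in the disk of a boundary point `x` and `W₁`, `W₂` are connected components
of `W ∩ (D² \ ∂D²)` whose closures both contain `x`, then `W₁ = W₂`. -/
theorem unit_disk_components_at_boundary_point
    (x : EuclideanSpace ℝ (Fin 2))
    (hx : x ∈ Metric.sphere (0 : EuclideanSpace ℝ (Fin 2)) 1)
    (W : Set (EuclideanSpace ℝ (Fin 2)))
    (hW : ∃ U : Set (EuclideanSpace ℝ (Fin 2)), IsOpen U ∧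
      W = U ∩ Metric.closedBall (0 : EuclideanSpace ℝ (Fin 2)) 1)
    (hxW : x ∈ W)
    (W₁ W₂ : Set (EuclideanSpace ℝ (Fin 2)))
    (h₁ : ∃ p ∈ W ∩ Metric.ball (0 : EuclideanSpace ℝ (Fin 2)) 1,
      W₁ = connectedComponentIn (W ∩ Metric.ball (0 : EuclideanSpace ℝ (Fin 2)) 1) p)
    (h₂ : ∃ p ∈ W ∩ Metric.ball (0 : EuclideanSpace ℝ (Fin 2)) 1,
      W₂ = connectedComponentIn (W ∩ Metric.ball (0 : EuclideanSpace ℝ (Fin 2)) 1) p)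
    (hx₁ : x ∈ closure W₁) (hx₂ : x ∈ closure W₂) :
    W₁ = W₂ :=
  unit_disk_components_at_boundary_point_general x W hW hxW W₁ W₂ h₁ h₂ hx₁ hx₂
end

section
/- Let T be a finite tree (a finite connected acyclic simple graph) with vertex set V, let V* ⊆ V contain all leaves of T, and let ρ be a convenient relation on V* such that all elements of V* generate a ρ-cycle. Let 𝒫 = {P(v, v') : v ρ v'} be the set of directed paths in T from v to v' for each pair with v ρ v'. Suppose that every edge of T lies on exactly two paths of 𝒫. Then for every edge e of T with endpoints w and w', the two paths of 𝒫 passing through e traverse e in opposite directions: one traverses e from w to w' and the other from w' to w. -/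
theorem GenCycle.eq_of_forall_rel_le {A α : Type*} [PartialOrder α] {ρ : A → A → Prop}
    {B : Set A} (hc : GenCycle ρ B) {φ : A → α} (hφ : ∀ a b, ρ a b → φ a ≤ φ b)
    {a b : A} (ha : a ∈ B) (hb : b ∈ B) : φ a = φ b := by
  obtain ⟨n, -, c, rfl, hstep, hlast⟩ := hc
  have hmono : Monotone (φ ∘ c) := Fin.monotone_iff_le_succ.mpr fun i => hφ _ _ (hstep i)
  have hconst : ∀ i, φ (c i) = φ (c 0) := fun i =>
    le_antisymm ((hmono (Fin.le_last i)).trans (hφ _ _ hlast)) (hmono (Fin.zero_le i))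
  obtain ⟨i, rfl⟩ := ha
  obtain ⟨j, rfl⟩ := hb
  rw [hconst i, hconst j]

namespace SimpleGraph

variable {V : Type*} {G : SimpleGraph V}

theorem Walk.mem_darts_toProd_or_of_mem_edges {u v w w' : V} {p : G.Walk u v}
    (he : s(w, w') ∈ p.edges) :
    (w, w') ∈ p.darts.map Dart.toProd ∨ (w', w) ∈ p.darts.map Dart.toProd := by
  rw [edges_eq_map_darts, List.mem_map] at he
  obtain ⟨d, hd, hde⟩ := he
  rcases dart_edge_eq_mk'_iff'.mp hde with ⟨h₁, h₂⟩ | ⟨h₁, h₂⟩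
  · exact .inl (List.mem_map.mpr ⟨d, hd, by rw [← h₁, ← h₂]⟩)
  · exact .inr (List.mem_map.mpr ⟨d, hd, by rw [← h₁, ← h₂]⟩)

theorem Walk.IsPath.reachable_deleteEdges_of_mem_darts {a c w w' : V} {p : G.Walk a c}
    (hp : p.IsPath) (hd : (w, w') ∈ p.darts.map Dart.toProd) :
    (G.deleteEdges {s(w, w')}).Reachable a w ∧ (G.deleteEdges {s(w, w')}).Reachable w' c := by
  induction p with
  | nil => simp at hd
  | @cons u v c huv q ih =>
    rw [cons_isPath_iff] at hp
    rw [darts_cons, List.map_cons, List.mem_cons] at hd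
    rcases hd with hd | hd
    · obtain ⟨rfl, rfl⟩ := Prod.mk.inj hd.symm
      have hq : s(u, v) ∉ q.edges := fun he => hp.2 (q.fst_mem_support_of_mem_edges he)
      exact ⟨.rfl, reachable_deleteEdges_iff_exists_walk.mpr ⟨q, hq⟩⟩
    · obtain ⟨hvw, hw'c⟩ := ih hp.1 hd
      obtain ⟨d, hdq, hd⟩ := List.mem_map.mp hd
      have he : s(w, w') ∈ q.edges := by
        rw [edges_eq_map_darts]
        exact List.mem_map.mpr ⟨d, hdq, by rw [Dart.edge, hd]⟩
      have hw := q.fst_mem_support_of_mem_edges he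
      have hw' := q.snd_mem_support_of_mem_edges he
      have huv' : (G.deleteEdges {s(w, w')}).Adj u v := by
        refine (deleteEdges_adj ..).mpr ⟨huv, fun he => ?_⟩
        rcases Sym2.eq_iff.mp he with ⟨rfl, -⟩ | ⟨rfl, -⟩
        exacts [hp.2 hw, hp.2 hw']
      exact ⟨huv'.reachable.trans hvw, hw'c⟩

theorem IsBridge.not_mem_edges_of_forall_mem_darts {w w' : V} (hb : G.IsBridge s(w, w'))
    {Vs : Set V} {ρ : V → V → Prop} (hsupp : ∀ a b : V, ρ a b → a ∈ Vs ∧ b ∈ Vs)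
    (hcyc : GenCycle ρ Vs) (P : ∀ v v' : V, ρ v v' → G.Walk v v')
    (hpath : ∀ (v v' : V) (h : ρ v v'), (P v v' h).IsPath)
    (hdir : ∀ (v v' : V) (h : ρ v v'), s(w, w') ∈ (P v v' h).edges →
      (w, w') ∈ (P v v' h).darts.map Dart.toProd)
    {u u' : V} (h : ρ u u') : s(w, w') ∉ (P u u' h).edges := by
  set H := G.deleteEdges {s(w, w')}
  have hside : ∀ v v' : V, ρ v v' → H.Reachable w' v ≤ H.Reachable w' v' := by
    intro v v' hv hw'v
    by_cases he : s(w, w') ∈ (P v v' hv).edges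
    · exact ((hpath v v' hv).reachable_deleteEdges_of_mem_darts (hdir v v' hv he)).2
    · exact hw'v.trans (reachable_deleteEdges_iff_exists_walk.mpr ⟨P v v' hv, he⟩)
  intro he
  obtain ⟨huw, hw'u'⟩ := (hpath u u' h).reachable_deleteEdges_of_mem_darts (hdir u u' h he)
  have hu : H.Reachable w' u :=
    hcyc.eq_of_forall_rel_le hside (hsupp u u' h).2 (hsupp u u' h).1 ▸ hw'u'
  exact isBridge_iff.mp hb (hu.trans huw).symm

end SimpleGraph

theorem tree_paths_traverse_edge_oppositely_general
    {V : Type*}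
    (G : SimpleGraph V)
    (hT : G.IsTree)
    (Vs : Set V)
    (ρ : V → V → Prop)
    (hsupp : ∀ a b : V, ρ a b → a ∈ Vs ∧ b ∈ Vs)
    (hcyc : GenCycle ρ Vs)
    (P : ∀ v v' : V, ρ v v' → G.Walk v v')
    (hpath : ∀ (v v' : V) (h : ρ v v'), (P v v' h).IsPath)
    (htwo : ∀ e ∈ G.edgeSet,
      ∃ v₁ v₁' v₂ v₂' : V, ∃ (h₁ : ρ v₁ v₁') (h₂ : ρ v₂ v₂'),
        (v₁, v₁') ≠ (v₂, v₂') ∧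
        e ∈ (P v₁ v₁' h₁).edges ∧ e ∈ (P v₂ v₂' h₂).edges ∧
        ∀ (u u' : V) (h : ρ u u'), e ∈ (P u u' h).edges →
          (u, u') = (v₁, v₁') ∨ (u, u') = (v₂, v₂')) :
    ∀ (w w' : V), G.Adj w w' →
      ∀ (v₁ v₁' v₂ v₂' : V) (h₁ : ρ v₁ v₁') (h₂ : ρ v₂ v₂'),
        (v₁, v₁') ≠ (v₂, v₂') →
        s(w, w') ∈ (P v₁ v₁' h₁).edges → s(w, w') ∈ (P v₂ v₂' h₂).edges →
        (((w, w') ∈ (P v₁ v₁' h₁).darts.map SimpleGraph.Dart.toProd ∧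
          (w', w) ∈ (P v₂ v₂' h₂).darts.map SimpleGraph.Dart.toProd) ∨
         ((w', w) ∈ (P v₁ v₁' h₁).darts.map SimpleGraph.Dart.toProd ∧
          (w, w') ∈ (P v₂ v₂' h₂).darts.map SimpleGraph.Dart.toProd)) := by
  intro w w' hadj v₁ v₁' v₂ v₂' h₁ h₂ hne hm₁ hm₂
  have hb : G.IsBridge s(w, w') :=
    SimpleGraph.isAcyclic_iff_forall_adj_isBridge.mp hT.isAcyclic hadj
  obtain ⟨u₁, u₁', u₂, u₂', -, -, -, -, -, hU⟩ := htwo s(w, w') hadj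
  have huniq : ∀ (u u' : V) (h : ρ u u'), s(w, w') ∈ (P u u' h).edges →
      (u, u') = (v₁, v₁') ∨ (u, u') = (v₂, v₂') := fun u u' h he => by
    have := hU u u' h he
    have := hU v₁ v₁' h₁ hm₁
    have := hU v₂ v₂' h₂ hm₂
    grind
  have hsame : ∀ {x x' : V}, s(x, x') = s(w, w') → G.IsBridge s(x, x') →
      (x, x') ∈ (P v₁ v₁' h₁).darts.map SimpleGraph.Dart.toProd →
      (x, x') ∈ (P v₂ v₂' h₂).darts.map SimpleGraph.Dart.toProd → False := by
    intro x x' hx hbx hd₁ hd₂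
    refine hbx.not_mem_edges_of_forall_mem_darts hsupp hcyc P hpath ?_ h₁ (hx ▸ hm₁)
    intro u u' h he
    rcases huniq u u' h (hx ▸ he) with he' | he' <;> obtain ⟨rfl, rfl⟩ := Prod.mk.inj he'
    exacts [hd₁, hd₂]
  rcases SimpleGraph.Walk.mem_darts_toProd_or_of_mem_edges hm₁ with d₁ | d₁ <;>
    rcases SimpleGraph.Walk.mem_darts_toProd_or_of_mem_edges hm₂ with d₂ | d₂
  · exact (hsame rfl hb d₁ d₂).elim
  · exact .inl ⟨d₁, d₂⟩
  · exact .inr ⟨d₁, d₂⟩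
  · exact (hsame Sym2.eq_swap (Sym2.eq_swap ▸ hb) d₁ d₂).elim

/-- Let `T` be a finite tree, `V* ⊆ V` a set of vertices containing all leaves, and `ρ` a
convenient relation supported on `V*` whose elements generate a `ρ`-cycle. For each pair
`v ρ v'` let `P v v'` be the (unique) path of `T` from `v` to `v'`. If every edge of `T`
lies on exactly two of these paths, then the two paths through any edge traverse it in
opposite directions. -/
theorem tree_paths_traverse_edge_oppositely
    {V : Type*} [Fintype V] [DecidableEq V]
    (G : SimpleGraph V) [DecidableRel G.Adj]
    (hT : G.IsTree)
    (Vs : Set V) (hleaf : ∀ v : V, G.degree v = 1 → v ∈ Vs)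
    (ρ : V → V → Prop)
    (hsupp : ∀ a b : V, ρ a b → a ∈ Vs ∧ b ∈ Vs)
    (hconv : Convenient ρ)
    (hcyc : GenCycle ρ Vs)
    (P : ∀ v v' : V, ρ v v' → G.Walk v v')
    (hpath : ∀ (v v' : V) (h : ρ v v'), (P v v' h).IsPath)
    (htwo : ∀ e ∈ G.edgeSet,
      ∃ v₁ v₁' v₂ v₂' : V, ∃ (h₁ : ρ v₁ v₁') (h₂ : ρ v₂ v₂'),
        (v₁, v₁') ≠ (v₂, v₂') ∧
        e ∈ (P v₁ v₁' h₁).edges ∧ e ∈ (P v₂ v₂' h₂).edges ∧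
        ∀ (u u' : V) (h : ρ u u'), e ∈ (P u u' h).edges →
          (u, u') = (v₁, v₁') ∨ (u, u') = (v₂, v₂')) :
    ∀ (w w' : V), G.Adj w w' →
      ∀ (v₁ v₁' v₂ v₂' : V) (h₁ : ρ v₁ v₁') (h₂ : ρ v₂ v₂'),
        (v₁, v₁') ≠ (v₂, v₂') →
        s(w, w') ∈ (P v₁ v₁' h₁).edges → s(w, w') ∈ (P v₂ v₂' h₂).edges →
        (((w, w') ∈ (P v₁ v₁' h₁).darts.map SimpleGraph.Dart.toProd ∧
          (w', w) ∈ (P v₂ v₂' h₂).darts.map SimpleGraph.Dart.toProd) ∨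
         ((w', w) ∈ (P v₁ v₁' h₁).darts.map SimpleGraph.Dart.toProd ∧
          (w, w') ∈ (P v₂ v₂' h₂).darts.map SimpleGraph.Dart.toProd)) :=
  tree_paths_traverse_edge_oppositely_general G hT Vs ρ hsupp hcyc P hpath htwo
end
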